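/- arXiv:0803.1189 — 7 statements merged into one kernel-verified Lean document; each statement's English description precedes it below -/
import Mathlib

section
/- Let w = uvxy be a binary 7/3-power-free word with |u| = |v| = |x| = |y| = 2^n. If u and v are Morse blocks (i.e., each equal to μ^n(0) or μ^n(1), where μ is the Thue–Morse morphism 0 ↦ 01, 1 ↦ 10), then x is also a Morse block. -/
def mu (w : List Bool) : List Bool := w.flatMap (fun b => if b then [true, false] else [false, true])

def isPow (beta : ℚ) (w : List Bool) : Prop :=
  ∃ (n : ℕ) (x x' : List Bool), x ≠ [] ∧ x' <+: x ∧
    w = (List.replicate n x).flatten ++ x' ∧ beta = n + (x'.length : ℚ) / (x.length : ℚ)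

def PowFree (a : ℚ) (w : List Bool) : Prop :=
  ∀ v, v <:+: w → ∀ beta : ℚ, a ≤ beta → ¬ isPow beta v

def OverlapFree (w : List Bool) : Prop :=
  ∀ u v : List Bool, u ≠ [] → ¬ (u ++ v ++ u ++ v ++ u) <:+: w

def MorseBlock (n : ℕ) (u : List Bool) : Prop := u = mu^[n] [false] ∨ u = mu^[n] [true]


/-! Induction on `n`, splitting every block of length `2 ^ (n + 1)` into two halves of length
`2 ^ n`. With `u = μⁿ(a ā)` and `v = μⁿ(c c̄)`, the induction hypothesis applied to sliding windows
of four half-blocks shows that the halves `x₁ x₂` of `x` are Morse blocks `μⁿ(p)`, `μⁿ(q)`. If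
`q = p̄` then `x = μⁿ⁺¹(p)`. Otherwise the first half of `y` is a Morse block `μⁿ(r)` as well, so
`w` contains `μⁿ(a ā c c̄ p p r)`; but every such word of length 7 contains a `7/3`-power, and `μ`
maps `α`-powers to `α`-powers. -/

lemma mu_append (s t : List Bool) : mu (s ++ t) = mu s ++ mu t := by simp [mu]

lemma mu_iterate_append (n : ℕ) (s t : List Bool) :
    mu^[n] (s ++ t) = mu^[n] s ++ mu^[n] t := by
  induction n generalizing s t with
  | zero => rfl
  | succ n ih => simp only [Function.iterate_succ_apply, mu_append, ih]

lemma mu_iterate_eq_flatten_map (n : ℕ) (l : List Bool) :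
    mu^[n] l = (l.map fun b => mu^[n] [b]).flatten := by
  induction l with
  | nil => exact Function.iterate_fixed rfl n
  | cons b t ih => rw [← List.singleton_append, mu_iterate_append, ih]; rfl

lemma mu_iterate_succ_singleton (n : ℕ) (b : Bool) :
    mu^[n + 1] [b] = mu^[n] [b] ++ mu^[n] [!b] := by
  rw [Function.iterate_succ_apply, ← mu_iterate_append]
  cases b <;> rfl

lemma length_mu (w : List Bool) : (mu w).length = 2 * w.length := by
  induction w with
  | nil => rfl
  | cons b t ih =>
    rw [← List.singleton_append, mu_append, List.length_append, ih]
    cases b <;> simp [mu] <;> ring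

lemma mu_flatten_replicate (k : ℕ) (x : List Bool) :
    mu (List.replicate k x).flatten = (List.replicate k (mu x)).flatten := by
  induction k with
  | zero => rfl
  | succ k ih => simp only [List.replicate_succ, List.flatten_cons, mu_append, ih]

lemma isPow_mu {β : ℚ} {w : List Bool} (h : isPow β w) : isPow β (mu w) := by
  obtain ⟨k, x, x', hx, ⟨t, rfl⟩, rfl, rfl⟩ := h
  refine ⟨k, mu (x' ++ t), mu x', ?_, ⟨mu t, (mu_append x' t).symm⟩, ?_, ?_⟩
  · rw [ne_eq, ← List.length_eq_zero_iff, length_mu]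
    simpa using hx
  · rw [mu_append, mu_flatten_replicate]
  · simp only [length_mu, Nat.cast_mul, Nat.cast_ofNat]
    rw [mul_div_mul_left _ _ two_ne_zero]

lemma isPow_mu_iterate (n : ℕ) {β : ℚ} {w : List Bool} (h : isPow β w) :
    isPow β (mu^[n] w) := by
  induction n with
  | zero => exact h
  | succ n ih => rw [Function.iterate_succ_apply']; exact isPow_mu ih

lemma mu_iterate_infix (n : ℕ) {v w : List Bool} (h : v <:+: w) : mu^[n] v <:+: mu^[n] w := by
  obtain ⟨s, t, rfl⟩ := h
  exact ⟨mu^[n] s, mu^[n] t, by simp only [mu_iterate_append]⟩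

lemma PowFree.of_infix {α : ℚ} {v w : List Bool} (h : PowFree α w) (hv : v <:+: w) :
    PowFree α v := fun f hf => h f (hf.trans hv)

lemma PowFree.of_mu_iterate {α : ℚ} {n : ℕ} {w : List Bool} (h : PowFree α (mu^[n] w)) :
    PowFree α w := fun f hf β hβ hpow =>
  h (mu^[n] f) (mu_iterate_infix n hf) β hβ (isPow_mu_iterate n hpow)

lemma isPow_replicate_append (k : ℕ) {x x' : List Bool} (hx : x ≠ []) (hx' : x' <+: x) :
    isPow (k + (x'.length : ℚ) / x.length) ((List.replicate k x).flatten ++ x') :=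
  ⟨k, x, x', hx, hx', rfl, rfl⟩

lemma not_powFree_of_isPow {α β : ℚ} {f w : List Bool} (hf : f <:+: w) (hαβ : α ≤ β)
    (hpow : isPow β f) : ¬ PowFree α w :=
  fun h => h f hf β hαβ hpow

lemma not_powFree_seven_thirds (a c p r : Bool) : ¬ PowFree (7/3) [a, !a, c, !c, p, p, r] := by
  have cube : ∀ b : Bool, isPow 3 [b, b, b] := fun b => by
    simpa using isPow_replicate_append 3 (List.cons_ne_nil b []) List.nil_prefix
  rcases Bool.eq_or_eq_not p c with rfl | rfl
  swap
  · exact not_powFree_of_isPow ⟨[a, !a, c], [r], rfl⟩ (by norm_num) (cube (!c))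
  rcases Bool.eq_or_eq_not r p with rfl | rfl
  · exact not_powFree_of_isPow ⟨[a, !a, r, !r], [], rfl⟩ (by norm_num) (cube r)
  rcases Bool.eq_or_eq_not a p with rfl | rfl
  · -- `a ā a ā a` is a `5/2`-power
    have h := isPow_replicate_append 2 (x' := [a]) (List.cons_ne_nil a [!a]) ⟨[!a], rfl⟩
    norm_num at h
    exact not_powFree_of_isPow ⟨[], [a, !a], rfl⟩ (by norm_num) h
  · -- `p̄ p p p̄ p p p̄` is a `7/3`-power
    have h := isPow_replicate_append 2 (x' := [!p]) (List.cons_ne_nil (!p) [p, p])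
      ⟨[p, p], rfl⟩
    norm_num at h
    exact not_powFree_of_isPow ⟨[], [], by simp⟩ le_rfl h

lemma morseBlock_iff {n : ℕ} {w : List Bool} : MorseBlock n w ↔ ∃ b, w = mu^[n] [b] := by
  simp only [MorseBlock, Bool.exists_bool]

lemma exists_append_of_length_eq_two_pow_succ {n : ℕ} {l : List Bool}
    (hl : l.length = 2 ^ (n + 1)) :
    ∃ l₁ l₂, l = l₁ ++ l₂ ∧ l₁.length = 2 ^ n ∧ l₂.length = 2 ^ n := by
  refine ⟨l.take (2 ^ n), l.drop (2 ^ n), (List.take_append_drop _ _).symm, ?_, ?_⟩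
  · rw [List.length_take, hl, pow_succ]; omega
  · rw [List.length_drop, hl, pow_succ]; omega

lemma exists_eq_mu_iterate_of_powFree {n : ℕ} {a c : Bool} {x y : List Bool}
    (h : PowFree (7/3) (mu^[n] [a] ++ mu^[n] [c] ++ x ++ y))
    (hx : x.length = 2 ^ n) (hy : y.length = 2 ^ n) : ∃ b, x = mu^[n] [b] := by
  induction n generalizing a c x y with
  | zero =>
    obtain ⟨b, rfl⟩ := List.length_eq_one_iff.mp hx
    exact ⟨b, rfl⟩
  | succ n ih =>
    obtain ⟨x₁, x₂, rfl, hx₁, hx₂⟩ := exists_append_of_length_eq_two_pow_succ hx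
    obtain ⟨y₁, y₂, rfl, hy₁, hy₂⟩ := exists_append_of_length_eq_two_pow_succ hy
    rw [mu_iterate_succ_singleton, mu_iterate_succ_singleton] at h
    obtain ⟨p, rfl⟩ := ih (a := c) (c := !c)
      (h.of_infix ⟨mu^[n] [a] ++ mu^[n] [!a], y₁ ++ y₂, by simp⟩) hx₁ hx₂
    obtain ⟨q, rfl⟩ := ih (a := !c) (c := p)
      (h.of_infix ⟨mu^[n] [a] ++ mu^[n] [!a] ++ mu^[n] [c], y₂, by simp⟩) hx₂ hy₁
    rcases Bool.eq_or_eq_not q p with rfl | rfl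
    · obtain ⟨r, rfl⟩ := ih (a := q) (c := q)
        (h.of_infix ⟨mu^[n] [a] ++ mu^[n] [!a] ++ mu^[n] [c] ++ mu^[n] [!c], [], by simp⟩) hy₁ hy₂
      have hw : mu^[n] [a, !a, c, !c, q, q, r] <:+: mu^[n] [a] ++ mu^[n] [!a] ++
          (mu^[n] [c] ++ mu^[n] [!c]) ++ (mu^[n] [q] ++ mu^[n] [q]) ++ (mu^[n] [r] ++ y₂) :=
        ⟨[], y₂, by simp [mu_iterate_eq_flatten_map n [a, !a, c, !c, q, q, r]]⟩
      exact absurd (h.of_infix hw).of_mu_iterate (not_powFree_seven_thirds a c q r)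
    · exact ⟨p, (mu_iterate_succ_singleton n p).symm⟩

theorem stmt2_general (n : ℕ) (u v x y : List Bool)
    (h : PowFree (7/3) (u ++ v ++ x ++ y))
    (hx : x.length = 2 ^ n) (hy : y.length = 2 ^ n)
    (hub : MorseBlock n u) (hvb : MorseBlock n v) :
    MorseBlock n x := by
  obtain ⟨a, rfl⟩ := morseBlock_iff.mp hub
  obtain ⟨c, rfl⟩ := morseBlock_iff.mp hvb
  exact morseBlock_iff.mpr (exists_eq_mu_iterate_of_powFree h hx hy)

theorem stmt2 (n : ℕ) (u v x y : List Bool)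
    (h : PowFree (7/3) (u ++ v ++ x ++ y))
    (hu : u.length = 2 ^ n) (hv : v.length = 2 ^ n)
    (hx : x.length = 2 ^ n) (hy : y.length = 2 ^ n)
    (hub : MorseBlock n u) (hvb : MorseBlock n v) :
    MorseBlock n x :=
  stmt2_general n u v x y h hx hy hub hvb
end

section
/- Let xx be a 7/3-power-free binary square with |xx| > 8. Then either xx = μ(y) for some binary word y, or xx = ā μ(y) a for some letter a ∈ {0,1} and binary word y, where ā denotes the complement of a and μ is the Thue–Morse morphism. -/
/-!
Call `i` a repeat of a binary sequence if its letters at `i` and `i + 1` coincide. A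
7/3-power-free binary sequence contains neither `aaa` nor `ababa`, and a factor `aabaa` extends
to `baabaab`; so consecutive repeats are at distance 2 or 4, and all repeats have the same
parity. Every factor of length at most `|x| + 1` of the periodic sequence `xxx⋯` occurs in `xx`,
so for `|x| ≥ 6` this applies to `xxx⋯`, and comparing the repeats at `k` and `k + |x|` shows
that `|x|` is even. If all repeats are odd, `xx` is a product of blocks `01`, `10`, i.e. `μ(y)`;
if all are even, the same holds for `xx` without its first and last letters, and these differ,
as otherwise `xxx⋯` would repeat at the odd position `|xx| - 1`. The length `|x| = 5`, too short
for `baabaab`, is excluded by inspecting the 32 words.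
-/

def HasPeriodOn {α : Type*} (c : ℕ → α) (p i m : ℕ) : Prop :=
  ∀ j, j + p < m → c (i + j) = c (i + j + p)

def RepeatsAt {α : Type*} (c : ℕ → α) (i : ℕ) : Prop := c i = c (i + 1)

/-- A factor of length `m` with period `p` is an `m/p`-power. -/
def ShortFactorsPowFree (M : ℕ) (c : ℕ → Bool) : Prop :=
  ∀ i p m, 0 < p → 7 * p ≤ 3 * m → m ≤ M → ¬ HasPeriodOn c p i m

namespace List

variable {α : Type*} {p : ℕ} {v : List α}

theorem take_drop_eq_take_of_period (hper : ∀ j, j + p < v.length → v[j]? = v[j + p]?) {k : ℕ}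
    (hk : k + p ≤ v.length) : (v.drop p).take k = v.take k := by
  refine ext_getElem? fun j => ?_
  simp only [getElem?_take, getElem?_drop]
  split_ifs with hj
  · rw [hper j (by omega), Nat.add_comm]
  · rfl

theorem eq_flatten_replicate_take_of_period (hper : ∀ j, j + p < v.length → v[j]? = v[j + p]?)
    {n r : ℕ} (hlen : v.length = n * p + r) :
    v = (replicate n (v.take p)).flatten ++ v.take r := by
  induction n generalizing v with
  | zero => simp_all
  | succ n ih =>
    have hdrop : ∀ j, j + p < (v.drop p).length → (v.drop p)[j]? = (v.drop p)[j + p]? := by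
      intro j hj
      simp only [length_drop, getElem?_drop] at hj ⊢
      rw [hper (p + j) (by omega), Nat.add_assoc]
    have hrep : replicate n ((v.drop p).take p) = replicate n (v.take p) := by
      rcases n with _ | n
      · rfl
      · rw [take_drop_eq_take_of_period hper (by rw [hlen]; nlinarith)]
    have ih' := ih hdrop (by rw [length_drop, hlen, Nat.succ_mul]; omega)
    rw [hrep, take_drop_eq_take_of_period hper (by rw [hlen, Nat.succ_mul]; omega)] at ih'
    rw [replicate_succ, flatten_cons, append_assoc, ← ih', take_append_drop]

end List

theorem PowFree.not_hasPeriodOn {a : ℚ} {w : List Bool} (hw : PowFree a w) {p i m : ℕ}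
    (hp : 0 < p) (hpm : p ≤ m) (ha : a * p ≤ m) (hm : i + m ≤ w.length) :
    ¬ HasPeriodOn (w.getD · false) p i m := by
  intro hper
  set v := (w.drop i).take m
  have hv : v.length = m := by simp only [v, List.length_take, List.length_drop]; omega
  have hvper : ∀ j, j + p < v.length → v[j]? = v[j + p]? := by
    intro j hj
    rw [hv] at hj
    have := hper j hj
    simp only [List.getD_eq_getElem?_getD] at this
    simp only [v, List.getElem?_take, List.getElem?_drop, if_pos hj, if_pos (show j < m by omega)]
    rw [List.getElem?_eq_getElem (by omega), List.getElem?_eq_getElem (by omega)] at this ⊢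
    simpa [Nat.add_assoc] using this
  have hinfix : v <:+: w := (List.take_prefix _ _).isInfix.trans (List.drop_suffix _ _).isInfix
  have hxlen : (v.take p).length = p := by simp [hv, hpm]
  have hrlen : (v.take (m % p)).length = m % p := by simp [hv, (Nat.mod_lt m hp).le.trans hpm]
  refine hw v hinfix ((m / p : ℕ) + (m % p : ℕ) / p : ℚ) ?_
    ⟨m / p, v.take p, v.take (m % p), ?_, ?_, ?_, by rw [hxlen, hrlen]⟩
  · have hp' : (0 : ℚ) < p := by exact_mod_cast hp
    have hdm : ((m / p : ℕ) : ℚ) * p + (m % p : ℕ) = m := by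
      exact_mod_cast Nat.div_add_mod' m p
    rw [← le_div_iff₀ hp'] at ha
    rwa [add_div' _ _ _ hp'.ne', hdm]
  · exact List.ne_nil_of_length_pos (by omega)
  · have hr := Nat.mod_lt m hp
    exact (List.prefix_take_le_iff (by rw [hv]; exact hr.trans_le hpm)).2 hr.le
  · exact List.eq_flatten_replicate_take_of_period hvper (by rw [hv, Nat.div_add_mod'])

theorem Function.Periodic.repeatsAt_add_iff {α : Type*} {c : ℕ → α} {n : ℕ}
    (hper : Function.Periodic c n) (i : ℕ) : RepeatsAt c (i + n) ↔ RepeatsAt c i := by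
  rw [RepeatsAt, RepeatsAt, hper, Nat.add_right_comm, hper]

namespace ShortFactorsPowFree

variable {M : ℕ} {c : ℕ → Bool}

theorem mono {N : ℕ} (hc : ShortFactorsPowFree M c) (hNM : N ≤ M) : ShortFactorsPowFree N c :=
  fun i p m hp hpm hmN => hc i p m hp hpm (hmN.trans hNM)

theorem not_repeatsAt_and_succ (hc : ShortFactorsPowFree 3 c) (i : ℕ) :
    ¬ (RepeatsAt c i ∧ RepeatsAt c (i + 1)) := by
  rintro ⟨h0, h1⟩
  refine hc i 1 3 one_pos (by norm_num) le_rfl fun j hj => ?_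
  obtain rfl | rfl : j = 0 ∨ j = 1 := by omega
  exacts [h0, h1]

theorem repeatsAt_of_window (hc : ShortFactorsPowFree 5 c) (i : ℕ) :
    RepeatsAt c i ∨ RepeatsAt c (i + 1) ∨ RepeatsAt c (i + 2) ∨ RepeatsAt c (i + 3) := by
  by_contra! h
  refine hc i 2 5 two_pos (by norm_num) le_rfl fun j hj => ?_
  simp only [RepeatsAt, ← ne_eq, ← Bool.eq_not_iff] at h
  obtain rfl | rfl | rfl : j = 0 ∨ j = 1 ∨ j = 2 := by omega
  all_goals simp_all [Nat.add_assoc]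

theorem false_of_repeatsAt_gap_three (hc : ShortFactorsPowFree 7 c) {i : ℕ}
    (h1 : RepeatsAt c (i + 1)) (h2 : ¬ RepeatsAt c (i + 2)) (h3 : ¬ RepeatsAt c (i + 3))
    (h4 : RepeatsAt c (i + 4)) : False := by
  have h0 : ¬ RepeatsAt c i := fun h0 =>
    (hc.mono (by norm_num)).not_repeatsAt_and_succ i ⟨h0, h1⟩
  have h5 : ¬ RepeatsAt c (i + 5) := fun h5 =>
    (hc.mono (by norm_num)).not_repeatsAt_and_succ (i + 4) ⟨h4, h5⟩
  refine hc i 3 7 three_pos le_rfl le_rfl fun j hj => ?_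
  simp only [RepeatsAt, ← ne_eq, ← Bool.eq_not_iff] at *
  obtain rfl | rfl | rfl | rfl : j = 0 ∨ j = 1 ∨ j = 2 ∨ j = 3 := by omega
  all_goals simp_all [Nat.add_assoc]

theorem repeatsAt_mod_two_eq (hc : ShortFactorsPowFree 7 c) {i j : ℕ} (hi : 1 ≤ i)
    (hij : i ≤ j) (hri : RepeatsAt c i) (hrj : RepeatsAt c j) : i % 2 = j % 2 := by
  induction hd : j - i using Nat.strong_induction_on generalizing i j with
  | _ d ih =>
  by_cases hk : ∃ k, i < k ∧ k < j ∧ RepeatsAt c k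
  · obtain ⟨k, hik, hkj, hrk⟩ := hk
    have := ih (k - i) (by omega) hi hik.le hri hrk rfl
    have := ih (j - k) (by omega) (by omega) hkj.le hrk hrj rfl
    omega
  push Not at hk
  by_contra hne
  obtain rfl | rfl | hj : j = i + 1 ∨ j = i + 3 ∨ i + 5 ≤ j := by omega
  · exact (hc.mono (by norm_num)).not_repeatsAt_and_succ i ⟨hri, hrj⟩
  · obtain ⟨i, rfl⟩ : ∃ i', i = i' + 1 := ⟨i - 1, by omega⟩
    exact hc.false_of_repeatsAt_gap_three hri (hk _ (by omega) (by omega))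
      (hk _ (by omega) (by omega)) hrj
  · rcases (hc.mono (by norm_num)).repeatsAt_of_window (i + 1) with h | h | h | h <;>
      exact hk _ (by omega) (by omega) h

variable {n : ℕ}

theorem even_of_periodic (hc : ShortFactorsPowFree 7 c) (hper : Function.Periodic c n) :
    Even n := by
  obtain ⟨k, hk, hrk⟩ : ∃ k, 1 ≤ k ∧ RepeatsAt c k := by
    rcases (hc.mono (by norm_num)).repeatsAt_of_window 1 with h | h | h | h
    all_goals exact ⟨_, by norm_num, h⟩
  have := hc.repeatsAt_mod_two_eq hk (Nat.le_add_right k n) hrk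
    ((hper.repeatsAt_add_iff k).2 hrk)
  exact Nat.even_iff.2 (by omega)

theorem repeatsAt_mod_two_eq_of_periodic (hc : ShortFactorsPowFree 7 c) (hn : 0 < n)
    (hper : Function.Periodic c n) {i j : ℕ} (hri : RepeatsAt c i) (hrj : RepeatsAt c j) :
    i % 2 = j % 2 := by
  wlog hij : i ≤ j generalizing i j
  · exact (this hrj hri (le_of_not_ge hij)).symm
  have := hc.repeatsAt_mod_two_eq (by omega) (Nat.add_le_add_right hij n)
    ((hper.repeatsAt_add_iff i).2 hri) ((hper.repeatsAt_add_iff j).2 hrj)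
  have := Nat.even_iff.1 (hc.even_of_periodic hper)
  omega

end ShortFactorsPowFree

def periodicExtension (x : List Bool) (k : ℕ) : Bool := x.getD (k % x.length) false

theorem periodic_periodicExtension (x : List Bool) :
    Function.Periodic (periodicExtension x) x.length := fun k => by
  simp only [periodicExtension, Nat.add_mod_right]

theorem getD_append_self {x : List Bool} {k : ℕ} (hk : k < 2 * x.length) :
    (x ++ x).getD k false = periodicExtension x k := by
  unfold periodicExtension
  rcases lt_or_ge k x.length with h | h
  · rw [List.getD_append _ _ _ _ h, Nat.mod_eq_of_lt h]
  · rw [List.getD_append_right _ _ _ _ h, Nat.mod_eq_sub_mod h, Nat.mod_eq_of_lt (by omega)]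

theorem PowFree.shortFactorsPowFree_periodicExtension {x : List Bool}
    (h : PowFree (7 / 3) (x ++ x)) : ShortFactorsPowFree (x.length + 1) (periodicExtension x) := by
  intro i p m hp hpm hm hper
  have hn : 0 < x.length := by omega
  have hi := Nat.mod_lt i hn
  have ha : (7 / 3 : ℚ) * p ≤ m := by
    rw [div_mul_eq_mul_div, div_le_iff₀ (by norm_num)]
    exact_mod_cast (by omega : 7 * p ≤ m * 3)
  refine h.not_hasPeriodOn (i := i % x.length) hp (by omega) ha
    (by simp only [List.length_append]; omega) fun j hj => ?_
  have hshift : ∀ k, periodicExtension x (i % x.length + k) = periodicExtension x (i + k) :=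
    fun k => by simp only [periodicExtension, Nat.add_mod, Nat.mod_mod]
  dsimp only
  rw [getD_append_self (by omega), getD_append_self (by omega), Nat.add_assoc, hshift, hshift,
    ← Nat.add_assoc]
  exact hper j hj

theorem not_shortFactorsPowFree_periodicExtension_of_length_eq_five {x : List Bool}
    (hx : x.length = 5) : ¬ ShortFactorsPowFree 5 (periodicExtension x) := by
  intro hc
  have key : ∃ i, i < 5 ∧
      ((RepeatsAt (periodicExtension x) i ∧ RepeatsAt (periodicExtension x) (i + 1)) ∨
        ¬ (RepeatsAt (periodicExtension x) i ∨ RepeatsAt (periodicExtension x) (i + 1) ∨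
          RepeatsAt (periodicExtension x) (i + 2) ∨
          RepeatsAt (periodicExtension x) (i + 3))) := by
    obtain ⟨a, b, c, d, e, rfl⟩ : ∃ a b c d e, x = [a, b, c, d, e] := by
      match x, hx with
      | [a, b, c, d, e], _ => exact ⟨a, b, c, d, e, rfl⟩
    unfold RepeatsAt
    cases a <;> cases b <;> cases c <;> cases d <;> cases e <;> decide
  obtain ⟨i, -, h3 | h5⟩ := key
  · exact (hc.mono (by norm_num)).not_repeatsAt_and_succ i h3
  · exact h5 (hc.repeatsAt_of_window i)

theorem mu_cons (a : Bool) (y : List Bool) : mu (a :: y) = a :: (!a) :: mu y := by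
  cases a <;> rfl

theorem exists_eq_mu_of_not_repeatsAt_even : ∀ w : List Bool, Even w.length →
    (∀ i, 2 * i + 1 < w.length → ¬ RepeatsAt (w.getD · false) (2 * i)) → ∃ y, w = mu y
  | [], _, _ => ⟨[], rfl⟩
  | [_], h, _ => absurd h (by simp)
  | a :: b :: t, h, ht => by
    obtain ⟨y, rfl⟩ := exists_eq_mu_of_not_repeatsAt_even t
      (by simpa [Nat.even_add_one] using h)
      fun i hi => by simpa [RepeatsAt, Nat.mul_add] using ht (i + 1) (by simp; omega)
    have hab : b = !a := Bool.eq_not_iff.2 (Ne.symm (ht 0 (by simp)))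
    exact ⟨a :: y, by rw [mu_cons, hab]⟩

theorem exists_eq_not_cons_mu_append_of_not_repeatsAt_odd (w : List Bool) (h : Even w.length)
    (hends : w.getD 0 false ≠ w.getD (w.length - 1) false)
    (hw : ∀ i, 2 * i + 2 < w.length → ¬ RepeatsAt (w.getD · false) (2 * i + 1)) :
    ∃ (a : Bool) (y : List Bool), w = (!a) :: (mu y ++ [a]) := by
  obtain _ | ⟨a, v⟩ := w
  · exact absurd rfl hends
  obtain rfl | ⟨u, b, rfl⟩ := v.eq_nil_or_concat
  · exact absurd rfl hends
  rw [List.concat_eq_append] at *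
  have hab : a ≠ b := by simpa using hends
  have hu : ∀ i, 2 * i + 1 < u.length → ¬ RepeatsAt (u.getD · false) (2 * i) := fun i hi => by
    have := hw i (by simp; omega)
    dsimp only [RepeatsAt] at this ⊢
    rwa [List.getD_cons_succ, List.getD_cons_succ, List.getD_append _ _ _ _ (by omega),
      List.getD_append _ _ _ _ hi] at this
  obtain ⟨y, rfl⟩ :=
    exists_eq_mu_of_not_repeatsAt_even u (by simpa [Nat.even_add_one] using h) hu
  exact ⟨b, y, by rw [← Bool.eq_not_iff.2 hab]⟩

theorem stmt4 (x : List Bool) (h : PowFree (7/3) (x ++ x)) (hl : 8 < (x ++ x).length) :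
    (∃ y, x ++ x = mu y) ∨ (∃ (a : Bool) (y : List Bool), x ++ x = (!a) :: (mu y ++ [a])) := by
  have hlen : (x ++ x).length = 2 * x.length := by rw [List.length_append, two_mul]
  have hc := h.shortFactorsPowFree_periodicExtension
  have hn : 6 ≤ x.length := by
    by_contra! hn
    exact not_shortFactorsPowFree_periodicExtension_of_length_eq_five (by omega)
      (hc.mono (by omega))
  have hparity : ∀ {i j},
      RepeatsAt (periodicExtension x) i → RepeatsAt (periodicExtension x) j → i % 2 = j % 2 :=
    (hc.mono (by omega)).repeatsAt_mod_two_eq_of_periodic (by omega) (periodic_periodicExtension x)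
  have hrep : ∀ k, k + 1 < (x ++ x).length → RepeatsAt ((x ++ x).getD · false) k →
      RepeatsAt (periodicExtension x) k := fun k hk hr => by
    rwa [RepeatsAt, getD_append_self (by omega), getD_append_self (by omega)] at hr
  have heven : Even (x ++ x).length := ⟨x.length, List.length_append⟩
  by_cases hev : ∃ i, RepeatsAt (periodicExtension x) (2 * i)
  · obtain ⟨i, hi⟩ := hev
    right
    refine exists_eq_not_cons_mu_append_of_not_repeatsAt_odd _ heven (fun hends => ?_)
      fun k hk hrk => absurd (hparity hi (hrep _ (by omega) hrk)) (by omega)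
    have hlast : RepeatsAt (periodicExtension x) (2 * x.length - 1) := by
      rw [getD_append_self (by omega), getD_append_self (by omega), hlen] at hends
      rw [RepeatsAt, Nat.sub_add_cancel (by omega)]
      simpa [periodicExtension] using hends.symm
    exact absurd (hparity hi hlast) (by omega)
  · left
    push Not at hev
    exact exists_eq_mu_of_not_repeatsAt_even _ heven fun i hi hri => hev i (hrep _ hi hri)
end

section
/- Every infinite overlap-free binary word has a position i at which no square begins. -/
def seg (w : ℕ → Bool) (i n : ℕ) : List Bool := (List.range n).map (fun j => w (i + j))

def FactorOf (v : List Bool) (w : ℕ → Bool) : Prop := ∃ i, v = seg w i v.length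

def PowFreeInf (a : ℚ) (w : ℕ → Bool) : Prop :=
  ∀ v, FactorOf v w → ∀ beta : ℚ, a ≤ beta → ¬ isPow beta v

def OverlapFreeInf (w : ℕ → Bool) : Prop :=
  ∀ u v : List Bool, u ≠ [] → ¬ FactorOf (u ++ v ++ u ++ v ++ u) w

def SqLenAt (w : ℕ → Bool) (i m : ℕ) : Prop := ∀ j < m, w (i + j) = w (i + m + j)

def SqAt (w : ℕ → Bool) (i : ℕ) : Prop := ∃ m, 0 < m ∧ SqLenAt w i m

/-! In an overlap-free word, two doubles `w j = w (j + 1)` at positions `j ≥ 1` lie an even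
distance apart (consecutive ones are 2 or 4 apart), so from some position `s` on the word is
`mu y` with `y k = w (s + 2k)`, and an overlap in `y` lifts to one in `w`. If every position
starts a square, the square starting in the middle of the block of `y k` has period 1 or 3,
and when `y k = y (k + 1)` it has period 3, which forces `y (k + 2) = y (k + 3) = !y k`.
So a double `aa` in `y`, which occurs among any five letters, continues as `aabbaabba`,
an overlap of `y`. -/

/-- `w[i, i + 2p]` is an overlap `uvuvu` with `|uv| = p`. -/
def OverlapAt (w : ℕ → Bool) (i p : ℕ) : Prop := ∀ t ≤ p, w (i + t) = w (i + p + t)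

def NoOverlap (w : ℕ → Bool) : Prop := ∀ i p, 0 < p → ¬ OverlapAt w i p

lemma seg_add (w : ℕ → Bool) (i m n : ℕ) : seg w i (m + n) = seg w i m ++ seg w (i + m) n := by
  simp only [seg, List.range_add, List.map_append, List.map_map]
  congr 1
  exact List.map_congr_left fun a _ => by simp [Nat.add_assoc]

lemma OverlapFreeInf.noOverlap {w : ℕ → Bool} (h : OverlapFreeInf w) : NoOverlap w := by
  intro i p hp hov
  have hsecond : seg w (i + p) p = seg w i p :=
    List.map_congr_left fun t ht => (hov t (List.mem_range.mp ht).le).symm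
  have hlast : seg w (i + p + p) 1 = [w i] := by
    simpa [seg] using ((hov 0 (Nat.zero_le _)).trans (hov p le_rfl)).symm
  have hfirst : seg w i p = [w i] ++ seg w (i + 1) (p - 1) := by
    obtain ⟨q, rfl⟩ : ∃ q, p = 1 + q := ⟨p - 1, by omega⟩
    rw [seg_add, Nat.add_sub_cancel_left]
    simp [seg]
  refine h [w i] (seg w (i + 1) (p - 1)) (by simp) ⟨i, ?_⟩
  have hlen : ([w i] ++ seg w (i + 1) (p - 1) ++ [w i] ++ seg w (i + 1) (p - 1) ++ [w i]).length
      = p + (p + 1) := by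
    simp [seg]
    omega
  rw [hlen, seg_add, seg_add, hsecond, hlast, hfirst]
  simp

lemma overlapAt_two_of_alternating {w : ℕ → Bool} {i : ℕ}
    (halt : ∀ t < 4, w (i + t + 1) = !w (i + t)) : OverlapAt w i 2 := fun t ht => by
  rw [show i + 2 + t = i + (t + 1) + 1 by omega, halt (t + 1) (by omega),
    show i + (t + 1) = i + t + 1 by omega, halt t (by omega), Bool.not_not]

lemma overlapAt_four_of_double_step {y : ℕ → Bool}
    (step : ∀ k, y k = y (k + 1) → y (k + 2) = !y k ∧ y (k + 3) = !y k) {k : ℕ}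
    (hk : y k = y (k + 1)) : OverlapAt y k 4 := by
  obtain ⟨a₂, a₃⟩ := step k hk
  obtain ⟨a₄, a₅⟩ := step (k + 2) (a₂.trans a₃.symm)
  obtain ⟨a₆, a₇⟩ := step (k + 4) (a₄.trans a₅.symm)
  obtain ⟨a₈, -⟩ := step (k + 6) (a₆.trans a₇.symm)
  intro t ht
  interval_cases t <;> simp_all

namespace NoOverlap

variable {w : ℕ → Bool}

lemma shift (h : NoOverlap w) (s : ℕ) : NoOverlap (fun n => w (s + n)) :=
  fun i p hp hov => h (s + i) p hp fun t ht => by simpa [Nat.add_assoc] using hov t ht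

lemma not_cube (h : NoOverlap w) (i : ℕ) (h₁ : w i = w (i + 1)) (h₂ : w (i + 1) = w (i + 2)) :
    False :=
  h i 1 one_pos fun t ht => by interval_cases t <;> assumption

lemma exists_double (h : NoOverlap w) (k : ℕ) : ∃ j, k ≤ j ∧ j ≤ k + 3 ∧ w j = w (j + 1) := by
  by_contra! hne
  exact h k 2 two_pos <| overlapAt_two_of_alternating fun t ht =>
    Bool.eq_not.mpr (hne (k + t) (by omega) (by omega)).symm

lemma eq_not_of_double_left (h : NoOverlap w) {j : ℕ} (d : w (j + 1) = w (j + 2)) :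
    w j = !w (j + 1) :=
  Bool.eq_not.mpr fun e => h.not_cube j e d

lemma eq_not_of_double_right (h : NoOverlap w) {j : ℕ} (d : w j = w (j + 1)) :
    w (j + 2) = !w (j + 1) :=
  Bool.eq_not.mpr fun e => h.not_cube j d e.symm

lemma not_double_double_three (h : NoOverlap w) {i : ℕ} (hi : 1 ≤ i) (d₁ : w i = w (i + 1))
    (d₂ : w (i + 3) = w (i + 4)) : False := by
  obtain ⟨m, rfl⟩ : ∃ m, i = m + 1 := ⟨i - 1, by omega⟩
  have e₀ := h.eq_not_of_double_left d₁
  have e₃ := h.eq_not_of_double_right d₁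
  have e₄ := h.eq_not_of_double_left (j := m + 3) d₂
  have e₆ := h.eq_not_of_double_right (j := m + 4) d₂
  refine h m 3 (by omega) fun t ht => ?_
  interval_cases t <;> simp_all

lemma mod_two_eq_of_double_near (h : NoOverlap w) {i j : ℕ} (hi : 1 ≤ i) (hij : i ≤ j)
    (hji : j ≤ i + 4) (di : w i = w (i + 1)) (dj : w j = w (j + 1)) : i % 2 = j % 2 := by
  obtain ⟨d, rfl⟩ : ∃ d, j = i + d := ⟨j - i, by omega⟩
  have hd : d ≤ 4 := by omega
  interval_cases d
  · rfl
  · exact (h.not_cube i di dj).elim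
  · omega
  · exact (h.not_double_double_three hi di dj).elim
  · omega

lemma mod_two_eq_of_double (h : NoOverlap w) {i j : ℕ} (hi : 1 ≤ i) (hij : i ≤ j)
    (di : w i = w (i + 1)) (dj : w j = w (j + 1)) : i % 2 = j % 2 := by
  induction j using Nat.strong_induction_on with
  | _ j ih =>
    by_cases hji : j ≤ i + 4
    · exact h.mod_two_eq_of_double_near hi hij hji di dj
    obtain ⟨l, hl, hlj, dl⟩ := h.exists_double (j - 4)
    exact (ih l (by omega) (by omega) dl).trans
      (h.mod_two_eq_of_double_near (by omega) (by omega) (by omega) dl dj)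

lemma exists_block_start (h : NoOverlap w) :
    ∃ s, ∀ n, n % 2 = 0 → w (s + n + 1) = !w (s + n) := by
  obtain ⟨d, hd, -, dd⟩ := h.exists_double 1
  refine ⟨d + 1, fun n hn => Bool.eq_not.mpr fun e => ?_⟩
  have := h.mod_two_eq_of_double hd (by omega) dd e.symm
  omega

lemma decode (h : NoOverlap w) (hv : ∀ n, n % 2 = 0 → w (n + 1) = !w n) :
    NoOverlap (fun k => w (2 * k)) := by
  intro k p hp hov
  refine h (2 * k) (2 * p) (by omega) fun t ht => ?_
  obtain ⟨u, rfl | rfl⟩ : ∃ u, t = 2 * u ∨ t = 2 * u + 1 := ⟨t / 2, by omega⟩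
  · simpa only [mul_add] using hov u (by omega)
  · rw [show 2 * k + (2 * u + 1) = 2 * (k + u) + 1 by ring,
      show 2 * k + 2 * p + (2 * u + 1) = 2 * (k + p + u) + 1 by ring,
      hv _ (by omega), hv _ (by omega)]
    simpa only [mul_add] using congrArg (!·) (hov u (by omega))

lemma square_period_of_odd_start (h : NoOverlap w)
    (hv : ∀ n, n % 2 = 0 → w (n + 1) = !w n) {j p : ℕ} (hj : j % 2 = 1) (hp : 0 < p)
    (hsq : SqLenAt w j p) : p = 1 ∨ p = 3 := by
  obtain hpe | hpo : p % 2 = 0 ∨ p % 2 = 1 := by omega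
  · exfalso
    obtain ⟨m, rfl⟩ : ∃ m, j = m + 1 := ⟨j - 1, by omega⟩
    refine h m p hp fun t ht => ?_
    obtain _ | s := t
    · have h₀ := hsq 0 hp
      rw [Nat.add_zero, hv m (by omega), show m + 1 + p = m + p + 1 by omega,
        hv (m + p) (by omega)] at h₀
      simpa using h₀
    · convert hsq s (by omega) using 2 <;> omega
  · by_contra hne
    refine h j 2 two_pos (overlapAt_two_of_alternating fun t ht => ?_)
    by_cases ht₂ : (j + t) % 2 = 0
    · exact hv _ ht₂
    · rw [show j + t + 1 = j + (t + 1) by omega, hsq (t + 1) (by omega),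
        show j + p + (t + 1) = j + p + t + 1 by omega, hv _ (by omega), ← hsq t (by omega)]

lemma double_step (h : NoOverlap w) (hv : ∀ n, n % 2 = 0 → w (n + 1) = !w n)
    {n : ℕ} (hn : n % 2 = 0) (hsq : SqAt w (n + 1)) (hd : w n = w (n + 2)) :
    w (n + 4) = !w n ∧ w (n + 6) = !w n := by
  obtain ⟨p, hp, hs⟩ := hsq
  have hv₀ := hv n hn
  have hv₂ := hv (n + 2) (by omega)
  rcases h.square_period_of_odd_start hv (by omega) hp hs with rfl | rfl
  · have h₀ := hs 0 one_pos
    simp_all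
  · have h₀ := hs 0 (by norm_num)
    have h₂ := hs 2 (by norm_num)
    simp_all

end NoOverlap

theorem stmt6 (w : ℕ → Bool) (h : OverlapFreeInf w) : ∃ i, ¬ SqAt w i := by
  by_contra! hsq
  obtain ⟨s, hs⟩ := h.noOverlap.exists_block_start
  set v : ℕ → Bool := fun n => w (s + n)
  have hv : NoOverlap v := h.noOverlap.shift s
  have hvb : ∀ n, n % 2 = 0 → v (n + 1) = !v n := fun n hn => by
    simpa [v, Nat.add_assoc] using hs n hn
  have hvsq : ∀ i, SqAt v i := fun i => by
    simpa [v, SqAt, SqLenAt, Nat.add_assoc] using hsq (s + i)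
  have hy := hv.decode hvb
  obtain ⟨k, -, -, hk⟩ := hy.exists_double 0
  refine hy k 4 (by norm_num) (overlapAt_four_of_double_step (fun j hj => ?_) hk)
  have hd : v (2 * j) = v (2 * j + 2) := by simpa [mul_add] using hj
  simpa [mul_add] using hv.double_step hvb (by omega) (hvsq (2 * j + 1)) hd
end

section
/- Let a be the infinite binary word obtained as the limit of the sequence A_0 = 00, A_{n+1} = 0·μ²(A_n) (each A_n is a prefix of A_{n+1}). Then for every n ≥ 0 and every position i with (4^n − 1)/3 ≤ i ≤ (4^{n+1} − 1)/3 − 1, the word a contains a square of length 2·4^{n+1} beginning at position i. In particular, a contains a square beginning at every position. -/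
def A : ℕ → List Bool
  | 0 => [false, false]
  | n + 1 => false :: mu (mu (A n))

/-!
The word `a` is the fixed point of `x ↦ 0·μ²(x)`, so `a (4k + 1 + r)` is the `r`-th letter of
`μ²(a k) = a k, ¬a k, ¬a k, a k`. Hence a period `P` of `a` on positions `[c, d)` becomes a
period `4P` on `[4c + 1, 4d + 1)`. Starting from the period `4` on `[0, 5)` and iterating, `a`
has period `4^(n+1)` on `[(4^n - 1)/3, (4^(n+1) - 1)/3 + 4^(n+1))`, which is exactly a square of
length `2·4^(n+1)` at each position of `[(4^n - 1)/3, (4^(n+1) - 1)/3)`; these intervals cover `ℕ`.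
-/

theorem List.getD_flatMap_of_length_eq {α β : Type*} {f : α → List β} {m : ℕ}
    (hf : ∀ x, (f x).length = m) (w : List α) {k r : ℕ} (hk : k < w.length) (hr : r < m)
    (x₀ : α) (y₀ : β) :
    (w.flatMap f).getD (m * k + r) y₀ = (f (w.getD k x₀)).getD r y₀ := by
  induction w generalizing k with
  | nil => simp at hk
  | cons x t ih =>
    rw [List.flatMap_cons]
    cases k with
    | zero => simpa using List.getD_append _ _ y₀ _ (hf x ▸ hr)
    | succ k =>
      have hmk : m * (k + 1) + r = (f x).length + (m * k + r) := by rw [hf]; ring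
      rw [hmk, List.getD_append_right _ _ _ _ (Nat.le_add_right _ _), Nat.add_sub_cancel_left]
      exact ih (by simpa using hk)

theorem mu_mu_eq_flatMap (w : List Bool) : mu (mu w) = w.flatMap (fun b => mu (mu [b])) := by
  unfold mu
  rw [List.flatMap_assoc]
  congr 1
  funext b
  cases b <;> rfl

theorem length_mu_mu_singleton (b : Bool) : (mu (mu [b])).length = 4 := by
  cases b <;> rfl

theorem A_succ (n : ℕ) : A (n + 1) = false :: (A n).flatMap (fun b => mu (mu [b])) := by
  rw [← mu_mu_eq_flatMap]
  rfl

theorem length_A_succ (n : ℕ) : (A (n + 1)).length = 4 * (A n).length + 1 := by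
  simp only [A_succ, List.length_cons, List.length_flatMap, length_mu_mu_singleton,
    List.map_const', List.sum_replicate, smul_eq_mul, mul_comm]

theorem lt_length_A (n : ℕ) : n < (A n).length := by
  induction n with
  | zero => decide
  | succ n ih => rw [length_A_succ]; omega

section FixedPoint

variable {a : ℕ → Bool} (ha : ∀ n, seg a 0 (A n).length = A n)
include ha

theorem apply_eq_getD_A {n k : ℕ} (hk : k < (A n).length) : a k = (A n).getD k false := by
  rw [← ha n, seg, List.getD_eq_getElem _ _ (by simpa using hk)]
  simp

theorem apply_four_mul_add_one_add (k : ℕ) {r : ℕ} (hr : r < 4) :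
    a (4 * k + 1 + r) = (mu (mu [a k])).getD r false := by
  have hk : k < (A k).length := lt_length_A k
  rw [apply_eq_getD_A ha (n := k + 1) (by rw [length_A_succ]; omega), apply_eq_getD_A ha hk,
    show 4 * k + 1 + r = (4 * k + r) + 1 by ring, A_succ, List.getD_cons_succ]
  exact List.getD_flatMap_of_length_eq length_mu_mu_singleton _ hk hr false false

end FixedPoint

theorem four_pow_succ_sub_one_div_three (n : ℕ) :
    (4 ^ (n + 1) - 1) / 3 = 4 * ((4 ^ n - 1) / 3) + 1 := by
  have hmod : 4 ^ n % 3 = 1 := by simp [Nat.pow_mod]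
  have hpos : 1 ≤ 4 ^ n := Nat.one_le_pow _ _ (by norm_num)
  rw [pow_succ]
  omega

theorem exists_four_pow_sub_one_div_three_le_lt (i : ℕ) :
    ∃ n, (4 ^ n - 1) / 3 ≤ i ∧ i < (4 ^ (n + 1) - 1) / 3 := by
  induction i with
  | zero => exact ⟨0, by norm_num⟩
  | succ i ih =>
    obtain ⟨n, hn, hi⟩ := ih
    by_cases hlt : i + 1 < (4 ^ (n + 1) - 1) / 3
    · exact ⟨n, by omega, hlt⟩
    · refine ⟨n + 1, by omega, ?_⟩
      rw [four_pow_succ_sub_one_div_three (n + 1)]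
      omega

section Periodicity

variable {w : ℕ → Bool} (hw : ∀ k r, r < 4 → w (4 * k + 1 + r) = (mu (mu [w k])).getD r false)
include hw

theorem apply_eq_apply_add_four_of_lt_five {p : ℕ} (hp : p < 5) : w p = w (p + 4) := by
  have h0 : w 0 = w 4 := by
    have := hw 0 3 (by norm_num); cases h : w 0 <;> simp_all [mu]
  have h1 : w 1 = w 0 := by
    have := hw 0 0 (by norm_num); cases h : w 0 <;> simp_all [mu]
  rcases Nat.eq_zero_or_pos p with rfl | hp0
  · exact h0
  · obtain ⟨r, hr, rfl⟩ : ∃ r, r < 4 ∧ p = 4 * 0 + 1 + r := ⟨p - 1, by omega, by omega⟩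
    rw [hw 0 r hr, show 4 * 0 + 1 + r + 4 = 4 * 1 + 1 + r by ring, hw 1 r hr, h1]

theorem apply_eq_apply_add_four_mul {P c d : ℕ} (h : ∀ k, c ≤ k → k < d → w k = w (k + P))
    {p : ℕ} (hcp : 4 * c + 1 ≤ p) (hpd : p < 4 * d + 1) : w p = w (p + 4 * P) := by
  obtain ⟨k, r, hr, rfl⟩ : ∃ k r, r < 4 ∧ p = 4 * k + 1 + r :=
    ⟨(p - 1) / 4, (p - 1) % 4, Nat.mod_lt _ (by norm_num), by omega⟩
  rw [show 4 * k + 1 + r + 4 * P = 4 * (k + P) + 1 + r by ring, hw k r hr, hw _ r hr,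
    h k (by omega) (by omega)]

theorem apply_eq_apply_add_four_pow_succ (n : ℕ) {p : ℕ} (hcp : (4 ^ n - 1) / 3 ≤ p)
    (hpd : p < (4 ^ (n + 1) - 1) / 3 + 4 ^ (n + 1)) : w p = w (p + 4 ^ (n + 1)) := by
  induction n generalizing p with
  | zero => exact apply_eq_apply_add_four_of_lt_five hw (by simpa using hpd)
  | succ n ih =>
    rw [four_pow_succ_sub_one_div_three] at hcp hpd
    rw [pow_succ 4 (n + 1), mul_comm]
    refine apply_eq_apply_add_four_mul hw (fun k => ih) hcp ?_
    rw [four_pow_succ_sub_one_div_three, pow_succ] at hpd ⊢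
    omega

end Periodicity

theorem stmt12 (a : ℕ → Bool) (ha : ∀ n, seg a 0 (A n).length = A n) :
    (∀ n i : ℕ, (4 ^ n - 1) / 3 ≤ i → i < (4 ^ (n + 1) - 1) / 3 →
      SqLenAt a i (4 ^ (n + 1))) ∧
    (∀ i, SqAt a i) := by
  have hrec := apply_four_mul_add_one_add ha
  have hsq : ∀ n i : ℕ, (4 ^ n - 1) / 3 ≤ i → i < (4 ^ (n + 1) - 1) / 3 →
      SqLenAt a i (4 ^ (n + 1)) := fun n i hni hin j hj => by
    rw [add_right_comm]
    exact apply_eq_apply_add_four_pow_succ (fun k r hr => hrec k hr) n (by omega) (by omega)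
  refine ⟨hsq, fun i => ?_⟩
  obtain ⟨n, hni, hin⟩ := exists_four_pow_sub_one_div_three_le_lt i
  exact ⟨4 ^ (n + 1), by positivity, hsq n i hni hin⟩
end

section
/- Every word in 𝒜 = ∪_{k≥0} μ^k({00, 11, 010010, 101101}) is a factor of the Thue–Morse word t = μ^∞(0). -/
def SetA : Set (List Bool) :=
  {[false, false], [true, true],
   [false, true, false, false, true, false], [true, false, true, true, false, true]}

def InA (w : List Bool) : Prop := ∃ (k : ℕ) (s : List Bool), s ∈ SetA ∧ w = mu^[k] s

def ConjInA (w : List Bool) : Prop :=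
  ∃ (k : ℕ) (s u v : List Bool), s ∈ SetA ∧ mu^[k] s = u ++ v ∧ w = v ++ u

/-! Each of the four seeds is a factor of μ⁵(0) = 01101001100101101001011001101001, and μ maps
factors to factors, so μᵏ of a seed is a factor of μᵏ⁺⁵(0), which is a prefix of t. -/

lemma iterate_mu_infix (k : ℕ) {a b : List Bool} (h : a <:+: b) :
    mu^[k] a <:+: mu^[k] b := by
  induction k with
  | zero => exact h
  | succ k ih =>
    rw [Function.iterate_succ_apply', Function.iterate_succ_apply']
    exact ih.flatMap _

lemma factorOf_of_infix_of_seg_zero {t : ℕ → Bool} {v w : List Bool}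
    (hw : seg t 0 w.length = w) (hv : v <:+: w) : FactorOf v t := by
  obtain ⟨a, b, rfl⟩ := hv
  refine ⟨a.length, ?_⟩
  rw [List.length_append, List.length_append, seg_add, seg_add, Nat.zero_add] at hw
  have hlen : (seg t 0 a.length ++ seg t a.length v.length).length = (a ++ v).length := by
    simp [seg]
  have hav := List.append_inj_left hw hlen
  exact ((List.append_inj hav (by simp [seg])).2).symm

theorem stmt13 (t : ℕ → Bool)
    (ht : ∀ k : ℕ, seg t 0 (mu^[k] [false]).length = mu^[k] [false]) :
    ∀ w, InA w → FactorOf w t := by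
  rintro w ⟨k, s, hs, rfl⟩
  have hseed : s <:+: mu^[5] [false] := by
    rcases hs with rfl | rfl | rfl | rfl <;> decide
  have hfactor : mu^[k] s <:+: mu^[k + 5] [false] := by
    rw [Function.iterate_add_apply]
    exact iterate_mu_infix k hseed
  exact factorOf_of_infix_of_seg_zero (ht (k + 5)) hfactor
end

section
/- The Thue–Morse word t does not begin with a square; i.e., there is no nonempty word x such that xx is a prefix of t. -/
/-
The prefix condition forces the Thue–Morse recurrences `t (2n) = t n` and `t (2n+1) = !t n`.
A square `xx` of even length `2a` at position 0 halves, via `t (2j) = t j`, to a square of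
length `a`. A square of odd length `2a+1` is impossible: for `a = 0` because `t 1 = !t 0`, and
for `a ≥ 1` because it would give `t (a+1) = t 1 = t 2 = t (2a+3) = !t (a+1)`.
-/

lemma mu_nil : mu [] = [] := rfl

lemma mu_cons_s14 (b : Bool) (w : List Bool) : mu (b :: w) = b :: (!b) :: mu w := by
  cases b <;> rfl

lemma length_iterate_mu (k : ℕ) (w : List Bool) : (mu^[k] w).length = 2 ^ k * w.length := by
  induction k with
  | zero => simp
  | succ k ih => rw [Function.iterate_succ_apply', length_mu, ih, pow_succ]; ring

lemma getElem?_mu_two_mul (w : List Bool) (i : ℕ) : (mu w)[2 * i]? = w[i]? := by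
  induction w generalizing i with
  | nil => simp [mu_nil]
  | cons b w ih =>
    cases i with
    | zero => simp [mu_cons_s14]
    | succ i => simpa [mu_cons_s14, Nat.mul_succ] using ih i

lemma getElem?_mu_two_mul_add_one (w : List Bool) (i : ℕ) :
    (mu w)[2 * i + 1]? = w[i]?.map (!·) := by
  induction w generalizing i with
  | nil => simp [mu_nil]
  | cons b w ih =>
    cases i with
    | zero => simp [mu_cons_s14]
    | succ i => simpa [mu_cons_s14, Nat.mul_succ] using ih i

section SegEqMu

variable {t : ℕ → Bool} {v : List Bool}

lemma getElem?_eq_of_seg_eq (hv : seg t 0 v.length = v) {i : ℕ} (hi : i < v.length) :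
    v[i]? = some (t i) := by
  rw [← hv]
  simp [seg, hi]

lemma apply_two_mul_of_seg_eq (hv : seg t 0 v.length = v) (hmv : seg t 0 (mu v).length = mu v)
    {n : ℕ} (hn : n < v.length) : t (2 * n) = t n := by
  have h := getElem?_eq_of_seg_eq hmv (i := 2 * n) (by rw [length_mu]; omega)
  rw [getElem?_mu_two_mul, getElem?_eq_of_seg_eq hv hn] at h
  exact (Option.some.inj h).symm

lemma apply_two_mul_add_one_of_seg_eq (hv : seg t 0 v.length = v)
    (hmv : seg t 0 (mu v).length = mu v) {n : ℕ} (hn : n < v.length) :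
    t (2 * n + 1) = !t n := by
  have h := getElem?_eq_of_seg_eq hmv (i := 2 * n + 1) (by rw [length_mu]; omega)
  rw [getElem?_mu_two_mul_add_one, getElem?_eq_of_seg_eq hv hn] at h
  simpa using (Option.some.inj h).symm

end SegEqMu

section Recurrence

variable {t : ℕ → Bool} (h_even : ∀ n, t (2 * n) = t n) (h_odd : ∀ n, t (2 * n + 1) = !t n)

include h_even in
lemma SqLenAt.of_two_mul {a : ℕ} (h : SqLenAt t 0 (2 * a)) : SqLenAt t 0 a := by
  intro j hj
  simpa only [zero_add, ← mul_add, h_even] using h (2 * j) (by omega)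

include h_even h_odd in
lemma not_sqLenAt_zero_two_mul_add_one (a : ℕ) : ¬ SqLenAt t 0 (2 * a + 1) := by
  intro h
  rcases a with _ | a
  · simpa [h_odd 0] using h 0 (by omega)
  · have h1 : t 1 = t (a + 2) := by
      simpa [show 2 * (a + 1) + 1 + 1 = 2 * (a + 2) by ring, h_even] using h 1 (by omega)
    have h2 : t 1 = !t (a + 2) := by
      simpa [show 2 * (a + 1) + 1 + 2 = 2 * (a + 2) + 1 by ring, h_odd, ← h_even 1] using
        h 2 (by omega)
    simp [h1] at h2

include h_even h_odd in
lemma not_sqAt_zero_of_recurrence : ¬ SqAt t 0 := by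
  rintro ⟨m, hm, h⟩
  induction m using Nat.strong_induction_on with
  | _ m ih =>
    obtain ⟨a, rfl | rfl⟩ := Nat.even_or_odd' m
    · exact ih a (by omega) (by omega) (h.of_two_mul h_even)
    · exact not_sqLenAt_zero_two_mul_add_one h_even h_odd a h

end Recurrence

theorem stmt14 (t : ℕ → Bool)
    (ht : ∀ k : ℕ, seg t 0 (mu^[k] [false]).length = mu^[k] [false]) :
    ¬ SqAt t 0 := by
  have hlen (n : ℕ) : n < (mu^[n] [false]).length := by
    simpa [length_iterate_mu] using Nat.lt_two_pow_self
  have hmu (n : ℕ) : seg t 0 (mu (mu^[n] [false])).length = mu (mu^[n] [false]) := by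
    simpa only [Function.iterate_succ_apply'] using ht (n + 1)
  exact not_sqAt_zero_of_recurrence
    (fun n => apply_two_mul_of_seg_eq (ht n) (hmu n) (hlen n))
    (fun n => apply_two_mul_add_one_of_seg_eq (ht n) (hmu n) (hlen n))
end

section
/- The word 01101001101100101100110100110110010110 is a square, contains no β-power for any rational β > 7/3, and is not a conjugate of any word in 𝒜 = ∪_{k≥0} μ^k({00, 11, 010010, 101101}). -/
def W : List Bool := [false, true, true, false, true, false, false, true, true, false, true, true, false, false, true, false, true, true, false, false, true, true, false, true, false, false, true, true, false, true, true, false, false, true, false, true, true, false]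

/-!
A β-power `x^n x'` is a prefix of `x ++ x^n x'`, so it has period `|x|` and length `β |x|`.
For `β > 7/3` it therefore contains a factor of length `⌊7p/3⌋ + 1` with period `p = |x|`, and
`p ≤ 16` because `W` has only 38 letters; that no window of `W` has such a period is a finite
check. For the last claim, `μ` doubles lengths, so conjugates of words of `𝒜` have length
`2^k · 2` or `2^k · 6`, never `38 = 2 · 19`.
-/

section Period

variable {α : Type*}

def HasPeriod (p : ℕ) (v : List α) : Prop :=
  ∀ j < v.length - p, v[j]? = v[j + p]?

instance [DecidableEq α] (p : ℕ) : DecidablePred (HasPeriod (α := α) p) :=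
  fun v => by unfold HasPeriod; infer_instance

lemma hasPeriod_of_prefix_append {x v : List α} (h : v <+: x ++ v) :
    HasPeriod x.length v := by
  obtain ⟨t, ht⟩ := h
  intro j hj
  have := congrArg (·[j + x.length]?) ht
  simp only [List.getElem?_append_right (Nat.le_add_left _ _), Nat.add_sub_cancel] at this
  rw [← this, List.getElem?_append_left (by omega)]

lemma HasPeriod.take {p : ℕ} {v : List α} (h : HasPeriod p v) (L : ℕ) :
    HasPeriod p (v.take L) := by
  intro j hj
  simp only [List.length_take] at hj
  rw [List.getElem?_take_of_lt (by omega), List.getElem?_take_of_lt (by omega)]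
  exact h j (by omega)

end Period

lemma isPow.hasPeriod {β : ℚ} {v : List Bool} (h : isPow β v) :
    ∃ p : ℕ, 0 < p ∧ β * p = v.length ∧ HasPeriod p v := by
  obtain ⟨n, x, x', hx, hx', rfl, rfl⟩ := h
  have hp : (0 : ℚ) < x.length := by exact_mod_cast List.length_pos_iff.mpr hx
  refine ⟨x.length, by exact_mod_cast hp, ?_, hasPeriod_of_prefix_append ?_⟩
  · simp only [List.length_append, List.length_flatten, List.map_replicate, List.sum_replicate,
      smul_eq_mul]
    push_cast
    field_simp
  · rw [← List.append_assoc, ← List.flatten_cons, ← List.replicate_succ, List.replicate_succ',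
      List.flatten_append, List.flatten_singleton, List.append_assoc]
    exact (List.prefix_append_right_inj _).mpr (hx'.trans (List.prefix_append x x'))

lemma ConjInA.length {w : List Bool} (h : ConjInA w) :
    ∃ k : ℕ, w.length = 2 ^ k * 2 ∨ w.length = 2 ^ k * 6 := by
  obtain ⟨k, s, u, v, hs, huv, rfl⟩ := h
  have hlen : (v ++ u).length = 2 ^ k * s.length := by
    rw [List.length_append, add_comm, ← List.length_append, ← huv, length_iterate_mu]
  simp only [SetA, Set.mem_insert_iff, Set.mem_singleton_iff] at hs
  refine ⟨k, ?_⟩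
  rcases hs with rfl | rfl | rfl | rfl <;> simp [hlen]

lemma length_W : W.length = 38 := rfl

lemma W_window_not_hasPeriod : ∀ p < 17, 0 < p → ∀ i < 38, i + (7 * p / 3 + 1) ≤ 38 →
    ¬ HasPeriod p ((W.drop i).take (7 * p / 3 + 1)) := by decide

lemma W_factor_length_le {v : List Bool} (hv : v <:+: W) {p : ℕ} (hp : 0 < p)
    (hper : HasPeriod p v) : 3 * v.length ≤ 7 * p := by
  by_contra! hlong
  obtain ⟨s, t, hst⟩ := hv
  have hlen := congrArg List.length hst
  simp only [List.length_append, length_W] at hlen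
  have hL : 7 * p / 3 + 1 ≤ v.length := by omega
  have hwindow : (W.drop s.length).take (7 * p / 3 + 1) = v.take (7 * p / 3 + 1) := by
    rw [← hst, List.append_assoc, List.drop_left, List.take_append_of_le_length hL]
  refine W_window_not_hasPeriod p (by omega) hp s.length (by omega) (by omega) ?_
  rw [hwindow]
  exact hper.take _

theorem stmt15 :
    (∃ x : List Bool, x ≠ [] ∧ W = x ++ x) ∧
    (∀ v, v <:+: W → ∀ beta : ℚ, 7/3 < beta → ¬ isPow beta v) ∧
    ¬ ConjInA W := by
  refine ⟨⟨W.take 19, by decide, by decide⟩, ?_, ?_⟩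
  · rintro v hv β hβ hpow
    obtain ⟨p, hp, hβp, hper⟩ := hpow.hasPeriod
    have hshort : (3 * v.length : ℚ) ≤ 7 * p := by exact_mod_cast W_factor_length_le hv hp hper
    have hpQ : (0 : ℚ) < p := by exact_mod_cast hp
    nlinarith
  · intro h
    obtain ⟨k, hk⟩ := h.length
    rw [length_W] at hk
    rcases k with _ | k <;> simp only [pow_succ, pow_zero] at hk <;> omega
end
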